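/- Let q, β > 0 and k ∈ ℕ. Then ∫_{-∞}^{∞} |h|^k Ψ(h) dh ≤ (1 - e^{-β})/((1 + e^{-β})(k+1)) + (q + 1/q)·e^{β}·k!/β^k, which is finite; in particular Ψ has finite absolute moments of all orders. -/

import Mathlib

open MeasureTheory Filter Real

noncomputable def nu (q β x : ℝ) : ℝ :=
  (1 - q * Real.exp (-β * x)) / (1 + q * Real.exp (-β * x))

noncomputable def G (q β x : ℝ) : ℝ := (1/4) * (nu q β (x+1) - nu q β (x-1))

noncomputable def Psi (q β x : ℝ) : ℝ := (G q β x + G (1/q) β x) / 2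

/-!
With `s = q e^{-βx}` and `c = e^{-β}`, one has `G q β x = s (1 - c²) / (2 (1 + s c)(c + s))`. By AM-GM this is at most `(1 - c) / (2 (1 + c))`, and dropping
the denominator it is at most `s (1 - c²) / (2c) ≤ β q e^β e^{-βx}`. Since `ν_{1/q}(-x) = -ν_q(x)`,
`Ψ` is even, so the `k`-th absolute moment is twice `∫_0^∞ t^k Ψ`; on `(0, 1]` use the constant
bound, on `(0, ∞)` the exponential one, whose moment is `k! / β^{k+1}`.
-/

open Set
open scoped Nat

theorem integral_le_setIntegral_add_integral {α : Type*} [MeasurableSpace α] {μ : Measure α}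
    {f g h : α → ℝ} {s : Set α} (hs : MeasurableSet s) (hf : Integrable f μ)
    (hg : Integrable g μ) (hh : IntegrableOn h s μ) (hg0 : 0 ≤ᵐ[μ] g)
    (hfg : f ≤ᵐ[μ] g) (hfh : ∀ x ∈ s, f x ≤ h x) :
    ∫ x, f x ∂μ ≤ ∫ x in s, h x ∂μ + ∫ x, g x ∂μ := by
  rw [← integral_add_compl hs hf]
  refine add_le_add (setIntegral_mono_on hf.integrableOn hh hs hfh) ?_
  calc ∫ x in sᶜ, f x ∂μ ≤ ∫ x in sᶜ, g x ∂μ :=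
          integral_mono_ae hf.integrableOn hg.integrableOn (ae_restrict_of_ae hfg)
    _ ≤ ∫ x, g x ∂μ := setIntegral_le_integral hg hg0

theorem MeasureTheory.IntegrableOn.comp_abs {f : ℝ → ℝ} (hf : IntegrableOn f (Ioi 0)) :
    Integrable fun x => f |x| := by
  have hIci : IntegrableOn (fun x => f |x|) (Ici 0) :=
    (integrableOn_Ici_iff_integrableOn_Ioi).2 <|
      hf.congr_fun (fun x hx => by rw [abs_of_pos hx]) measurableSet_Ioi
  have hIic : IntegrableOn (fun x => f |x|) (Iic 0) := by
    have hmirror : (Iic 0).indicator (fun x => f |x|) =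
        fun x => (Ici 0).indicator (fun x => f |x|) (-x) := by
      funext x
      simp [Set.indicator_apply]
    rw [← integrable_indicator_iff measurableSet_Iic, hmirror]
    exact ((integrable_indicator_iff measurableSet_Ici).2 hIci).comp_neg
  simpa using hIic.union hIci

theorem integral_pow_mul_exp_neg_mul_Ioi (k : ℕ) {b : ℝ} (hb : 0 < b) :
    ∫ t in Ioi 0, t ^ k * exp (-(b * t)) = k ! / b ^ (k + 1) := by
  have key := integral_rpow_mul_exp_neg_mul_Ioi (by positivity : (0:ℝ) < k + 1) hb
  simp_rw [add_sub_cancel_right, rpow_natCast, Gamma_nat_eq_factorial] at key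
  rw [key, ← Nat.cast_succ, rpow_natCast, div_pow, one_pow, div_mul_eq_mul_div, one_mul]

theorem integrableOn_pow_mul_exp_neg_mul_Ioi (k : ℕ) {b : ℝ} (hb : 0 < b) :
    IntegrableOn (fun t => t ^ k * exp (-(b * t))) (Ioi 0) :=
  .of_integral_ne_zero (by rw [integral_pow_mul_exp_neg_mul_Ioi k hb]; positivity)

theorem one_sub_exp_neg_sq_le (β : ℝ) : 1 - exp (-β) ^ 2 ≤ 2 * β := by
  rw [← exp_nat_mul, Nat.cast_ofNat, mul_neg]
  linarith [add_one_le_exp (-(2 * β))]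

section
variable {q β : ℝ}

theorem G_eq (hq : 0 < q) (x : ℝ) :
    G q β x = q * exp (-β * x) * (1 - exp (-β) ^ 2) /
      (2 * (1 + q * exp (-β * x) * exp (-β)) * (exp (-β) + q * exp (-β * x))) := by
  have hs := exp_pos (-β * x)
  have hc := exp_pos (-β)
  rw [G, nu, nu, show -β * (x + 1) = -β * x + -β by ring,
    show -β * (x - 1) = -β * x - -β by ring, exp_add, exp_sub]
  field_simp
  ring

theorem G_nonneg (hq : 0 < q) (hβ : 0 ≤ β) (x : ℝ) : 0 ≤ G q β x := by
  have hc2 : exp (-β) ^ 2 ≤ 1 := pow_le_one₀ (exp_pos _).le (exp_le_one_iff.2 (by linarith))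
  rw [G_eq hq x]
  exact div_nonneg (mul_nonneg (by positivity) (by linarith)) (by positivity)

theorem G_le (hq : 0 < q) (hβ : 0 ≤ β) (x : ℝ) :
    G q β x ≤ (1 - exp (-β)) / (2 * (1 + exp (-β))) := by
  rw [G_eq hq x]
  set s := q * exp (-β * x)
  set c := exp (-β)
  have hs : 0 < s := by positivity
  have hc : 0 < c := exp_pos _
  have hc1 : c ≤ 1 := exp_le_one_iff.2 (by linarith)
  rw [div_le_div_iff₀ (by positivity) (by positivity)]
  -- after cancelling `1 - c`, this is `0 ≤ c (1 - s)²`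
  nlinarith [mul_nonneg (mul_nonneg (sub_nonneg.2 hc1) hc.le) (sq_nonneg (1 - s))]

theorem G_le_exp (hq : 0 < q) (hβ : 0 ≤ β) (x : ℝ) :
    G q β x ≤ β * exp β * (q * exp (-β * x)) := by
  rw [G_eq hq x]
  set s := q * exp (-β * x)
  set c := exp (-β)
  have hs : 0 < s := by positivity
  have hc : 0 < c := exp_pos _
  have hc2 : c ^ 2 ≤ 1 := pow_le_one₀ hc.le (exp_le_one_iff.2 (by linarith))
  calc s * (1 - c ^ 2) / (2 * (1 + s * c) * (c + s))
      ≤ s * (1 - c ^ 2) / (2 * c) := by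
        apply div_le_div_of_nonneg_left (by nlinarith) (by positivity)
        nlinarith [mul_pos hs hc, mul_pos (mul_pos hs hc) hs]
    _ ≤ s * (2 * β) / (2 * c) := by gcongr; exact one_sub_exp_neg_sq_le β
    _ = β * exp β * s := by rw [show exp β = c⁻¹ by simp [c, exp_neg]]; field_simp

theorem nu_one_div_neg (hq : 0 < q) (x : ℝ) : nu (1 / q) β (-x) = -nu q β x := by
  have hs := exp_pos (-β * x)
  rw [nu, nu, show -β * -x = -(-β * x) by ring, exp_neg]
  field_simp
  ring

theorem G_one_div_neg (hq : 0 < q) (x : ℝ) : G (1 / q) β (-x) = G q β x := by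
  rw [G, G, show -x + 1 = -(x - 1) by ring, show -x - 1 = -(x + 1) by ring,
    nu_one_div_neg hq, nu_one_div_neg hq]
  ring

theorem Psi_neg (hq : 0 < q) (x : ℝ) : Psi q β (-x) = Psi q β x := by
  have h := G_one_div_neg (one_div_pos.2 hq) (β := β) x
  rw [one_div_one_div] at h
  rw [Psi, Psi, G_one_div_neg hq, h, add_comm]

theorem Psi_abs (hq : 0 < q) (x : ℝ) : Psi q β |x| = Psi q β x := by
  rcases abs_choice x with h | h <;> rw [h]
  exact Psi_neg hq x

@[fun_prop]
theorem measurable_Psi : Measurable (Psi q β) := by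
  unfold Psi G nu
  fun_prop

theorem Psi_nonneg (hq : 0 < q) (hβ : 0 ≤ β) (x : ℝ) : 0 ≤ Psi q β x := by
  have := G_nonneg hq hβ x
  have := G_nonneg (one_div_pos.2 hq) hβ x
  rw [Psi]
  positivity

theorem Psi_le (hq : 0 < q) (hβ : 0 ≤ β) (x : ℝ) :
    Psi q β x ≤ (1 - exp (-β)) / (2 * (1 + exp (-β))) := by
  have := G_le hq hβ x
  have := G_le (one_div_pos.2 hq) hβ x
  rw [Psi]
  linarith

theorem pow_mul_Psi_le_exp (hq : 0 < q) (hβ : 0 ≤ β) (k : ℕ) {t : ℝ} (ht : 0 ≤ t) :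
    t ^ k * Psi q β t ≤ β / 2 * (q + 1 / q) * exp β * (t ^ k * exp (-(β * t))) := by
  have := G_le_exp hq hβ t
  have := G_le_exp (one_div_pos.2 hq) hβ t
  have hPsi : Psi q β t ≤ β / 2 * (q + 1 / q) * exp β * exp (-(β * t)) := by
    rw [Psi, ← neg_mul]
    linarith
  rw [mul_left_comm]
  exact mul_le_mul_of_nonneg_left hPsi (by positivity)

theorem integrableOn_pow_mul_Psi (hq : 0 < q) (hβ : 0 < β) (k : ℕ) :
    IntegrableOn (fun t => t ^ k * Psi q β t) (Ioi 0) := by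
  refine ((integrableOn_pow_mul_exp_neg_mul_Ioi k hβ).const_mul
    (β / 2 * (q + 1 / q) * exp β)).mono' (by fun_prop) ?_
  filter_upwards [ae_restrict_mem measurableSet_Ioi] with t (ht : 0 < t)
  have := Psi_nonneg hq hβ.le t
  rw [Real.norm_of_nonneg (by positivity)]
  exact pow_mul_Psi_le_exp hq hβ.le k ht.le

theorem setIntegral_pow_mul_Psi_le (hq : 0 < q) (hβ : 0 < β) (k : ℕ) :
    ∫ t in Ioi 0, t ^ k * Psi q β t ≤
      (1 - exp (-β)) / (2 * (1 + exp (-β))) / (k + 1) +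
        β / 2 * (q + 1 / q) * exp β * (k ! / β ^ (k + 1)) := by
  have hsplit := integral_le_setIntegral_add_integral (μ := volume.restrict (Ioi 0))
    (s := Ioc 0 1) (h := fun t => t ^ k * ((1 - exp (-β)) / (2 * (1 + exp (-β)))))
    measurableSet_Ioc (integrableOn_pow_mul_Psi hq hβ k)
    ((integrableOn_pow_mul_exp_neg_mul_Ioi k hβ).const_mul (β / 2 * (q + 1 / q) * exp β))
    (Continuous.integrableOn_Ioc (by fun_prop))
    (by
      filter_upwards [ae_restrict_mem measurableSet_Ioi] with t (ht : 0 < t)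
      positivity)
    (by
      filter_upwards [ae_restrict_mem measurableSet_Ioi] with t (ht : 0 < t)
      exact pow_mul_Psi_le_exp hq hβ.le k ht.le)
    (fun t ht => mul_le_mul_of_nonneg_left (Psi_le hq hβ.le t) (pow_nonneg ht.1.le k))
  rwa [Measure.restrict_restrict_of_subset Ioc_subset_Ioi_self, integral_mul_const,
    ← intervalIntegral.integral_of_le zero_le_one, integral_pow, integral_const_mul,
    integral_pow_mul_exp_neg_mul_Ioi k hβ, one_pow, zero_pow k.succ_ne_zero, sub_zero,
    one_div_mul_eq_div] at hsplit

end

theorem Psi_absolute_moments (q β : ℝ) (hq : 0 < q) (hβ : 0 < β) (k : ℕ) :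
    (Integrable fun h : ℝ => |h| ^ k * Psi q β h) ∧
    (∫ h : ℝ, |h| ^ k * Psi q β h) ≤
      (1 - Real.exp (-β)) / ((1 + Real.exp (-β)) * (k + 1)) +
        (q + 1/q) * Real.exp β * (Nat.factorial k) / β ^ k := by
  have heven : (fun h : ℝ => |h| ^ k * Psi q β h) = fun h => |h| ^ k * Psi q β |h| := by
    simp_rw [Psi_abs hq]
  rw [heven]
  refine ⟨(integrableOn_pow_mul_Psi hq hβ k).comp_abs, ?_⟩
  rw [integral_comp_abs (f := fun t => t ^ k * Psi q β t)]
  calc 2 * ∫ t in Ioi 0, t ^ k * Psi q β t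
      ≤ 2 * ((1 - exp (-β)) / (2 * (1 + exp (-β))) / (k + 1) +
          β / 2 * (q + 1 / q) * exp β * (k ! / β ^ (k + 1))) := by
        gcongr
        exact setIntegral_pow_mul_Psi_le hq hβ k
    _ = _ := by
        field_simp
        ring
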